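/- For every simple graph G, the total graph T(G) is isomorphic to H², where H is the graph obtained from G by subdividing every edge of G exactly once. -/

import Mathlib

open SimpleGraph

attribute [local instance] Classical.propDecidable

/-- The total graph of `G`: vertices are the vertices and edges of `G`, with adjacency
given by adjacency or incidence in `G`. -/
def totalGraph {V : Type} (G : SimpleGraph V) : SimpleGraph (V ⊕ G.edgeSet) :=
  SimpleGraph.fromRel (fun x y => match x, y with
    | Sum.inl u, Sum.inl v => G.Adj u v
    | Sum.inl u, Sum.inr e => u ∈ (e : Sym2 V)
    | Sum.inr _, Sum.inl _ => False
    | Sum.inr e, Sum.inr f => ∃ u, u ∈ (e : Sym2 V) ∧ u ∈ (f : Sym2 V))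

/-- The subdivision of `G`: every edge of `G` is subdivided exactly once; the new vertex on
edge `e` is `Sum.inr e`, adjacent to exactly the endpoints of `e`. -/
def subdivision {V : Type} (G : SimpleGraph V) : SimpleGraph (V ⊕ G.edgeSet) :=
  SimpleGraph.fromRel (fun x y => match x, y with
    | Sum.inl v, Sum.inr e => v ∈ (e : Sym2 V)
    | _, _ => False)

/-- The `p`-th power of `G`: same vertices, edges between distinct vertices at distance
at most `p` in `G`. -/
def graphPow {V : Type} (G : SimpleGraph V) (p : ℕ) : SimpleGraph V :=
  SimpleGraph.fromRel (fun u v => G.Reachable u v ∧ G.dist u v ≤ p)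

/-!
Both graphs live on `V ⊕ E(G)`, and the identity is the isomorphism. In the subdivision `S` two
distinct elements are at distance at most 2 iff they are adjacent or have a common neighbour. A
vertex and an edge are adjacent in `S` iff they are incident, and never have a common neighbour
since `S` is bipartite; two vertices have a common neighbour iff they span an edge of `G`, and two
edges iff they share an endpoint. These are exactly the adjacencies of `T(G)`.
-/

section

variable {V : Type} {G : SimpleGraph V} {u v : V}

lemma SimpleGraph.reachable_and_dist_le_iff_edist_le (n : ℕ) :
    G.Reachable u v ∧ G.dist u v ≤ n ↔ G.edist u v ≤ n := by
  constructor
  · rintro ⟨hr, hd⟩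
    rw [← hr.coe_dist_eq_edist]
    exact_mod_cast hd
  · intro h
    have hr : G.Reachable u v :=
      reachable_of_edist_ne_top (ne_top_of_le_ne_top (ENat.natCast_ne_top n) h)
    exact ⟨hr, by rwa [← hr.coe_dist_eq_edist, Nat.cast_le] at h⟩

lemma graphPow_adj {p : ℕ} : (graphPow G p).Adj u v ↔ u ≠ v ∧ G.edist u v ≤ p := by
  simp only [graphPow, fromRel_adj, reachable_and_dist_le_iff_edist_le, edist_comm (u := v),
    or_self]

lemma graphPow_two_adj :
    (graphPow G 2).Adj u v ↔ u ≠ v ∧ (G.Adj u v ∨ (G.commonNeighbors u v).Nonempty) := by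
  rw [graphPow_adj, Nat.cast_ofNat, ← not_lt, two_lt_edist_iff, ← Set.not_nonempty_iff_eq_empty]
  tauto

variable {e f : G.edgeSet}

@[simp] lemma subdivision_adj_inl_inl : ¬(subdivision G).Adj (.inl u) (.inl v) := by
  simp [subdivision]

@[simp] lemma subdivision_adj_inr_inr : ¬(subdivision G).Adj (.inr e) (.inr f) := by
  simp [subdivision]

@[simp] lemma subdivision_adj_inl_inr :
    (subdivision G).Adj (.inl u) (.inr e) ↔ u ∈ (e : Sym2 V) := by
  simp [subdivision]

@[simp] lemma subdivision_adj_inr_inl :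
    (subdivision G).Adj (.inr e) (.inl u) ↔ u ∈ (e : Sym2 V) := by
  simp [subdivision]

lemma subdivision_commonNeighbors_inl_inl_nonempty (huv : u ≠ v) :
    ((subdivision G).commonNeighbors (.inl u) (.inl v)).Nonempty ↔ G.Adj u v := by
  simp only [Set.Nonempty, mem_commonNeighbors, Sum.exists, subdivision_adj_inl_inl,
    subdivision_adj_inl_inr, false_and, exists_false, false_or]
  constructor
  · rintro ⟨e, hu, hv⟩
    exact (mem_edgeSet G).mp ((Sym2.mem_and_mem_iff huv).mp ⟨hu, hv⟩ ▸ e.2)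
  · exact fun h ↦ ⟨⟨s(u, v), h⟩, Sym2.mem_mk_left u v, Sym2.mem_mk_right u v⟩

lemma subdivision_commonNeighbors_inr_inr_nonempty :
    ((subdivision G).commonNeighbors (.inr e) (.inr f)).Nonempty ↔
      ∃ u, u ∈ (e : Sym2 V) ∧ u ∈ (f : Sym2 V) := by
  simp [Set.Nonempty, mem_commonNeighbors, Sum.exists]

lemma subdivision_commonNeighbors_inl_inr :
    (subdivision G).commonNeighbors (.inl u) (.inr e) = ∅ := by
  ext (w | w) <;> simp [mem_commonNeighbors]

@[simp] lemma totalGraph_adj_inl_inl : (totalGraph G).Adj (.inl u) (.inl v) ↔ G.Adj u v := by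
  simp only [totalGraph, fromRel_adj, G.adj_comm v u, or_self]
  exact and_iff_right_of_imp fun h ↦ Sum.inl_injective.ne h.ne

@[simp] lemma totalGraph_adj_inl_inr :
    (totalGraph G).Adj (.inl u) (.inr e) ↔ u ∈ (e : Sym2 V) := by
  simp [totalGraph]

@[simp] lemma totalGraph_adj_inr_inl :
    (totalGraph G).Adj (.inr e) (.inl u) ↔ u ∈ (e : Sym2 V) := by
  simp [totalGraph]

@[simp] lemma totalGraph_adj_inr_inr :
    (totalGraph G).Adj (.inr e) (.inr f) ↔ e ≠ f ∧ ∃ u, u ∈ (e : Sym2 V) ∧ u ∈ (f : Sym2 V) := by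
  simp only [totalGraph, fromRel_adj, ne_eq, Sum.inr.injEq, and_comm (a := _ ∈ (f : Sym2 V)),
    or_self]

end

theorem totalGraph_eq_graphPow_two_subdivision {V : Type} (G : SimpleGraph V) :
    totalGraph G = graphPow (subdivision G) 2 := by
  ext (u | e) (v | f)
  · by_cases huv : u = v
    · simp [huv]
    · simp [graphPow_two_adj, huv, subdivision_commonNeighbors_inl_inl_nonempty huv]
  · simp [graphPow_two_adj, subdivision_commonNeighbors_inl_inr]
  · simp [graphPow_two_adj, subdivision_commonNeighbors_inl_inr, commonNeighbors_symm]
  · simp [graphPow_two_adj, subdivision_commonNeighbors_inr_inr_nonempty]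

theorem total_graph_iso_subdivision_square {V : Type} (G : SimpleGraph V) :
    Nonempty (totalGraph G ≃g graphPow (subdivision G) 2) := by
  rw [totalGraph_eq_graphPow_two_subdivision]
  exact ⟨Iso.refl⟩
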